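/- The map v̂_0 is a chain map (d ∘ v̂_0 = v̂_0 ∘ d̂_0), and the induced map on homology H(Â_0) → H(B̂) is zero: for every c ∈ Â_0 with d̂_0(c) = 0, the element v̂_0(c) lies in the image of d. (This is the statement that the generator b_0 of H(B̂) is not the image of any cycle in Â_0, showing nu(T_{2,9} # -T_{2,3;2,5}) > 0; together with the nontriviality of v̂_1 on homology it gives nu(T_{2,9} # -T_{2,3;2,5}) = 1.) -/

import Mathlib

noncomputable section

abbrev F : Type := ZMod 2

abbrev Bhat : Type := Fin 13 → F
abbrev Ahat0 : Type := Fin 13 → F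

/-- The standard basis of `Bhat`, modeling `b_0, ..., b_12`. -/
def b (i : Fin 13) : Bhat := Pi.single i 1

/-- The standard basis of `Ahat0`, modeling `â_0, ..., â_12`. -/
def a (i : Fin 13) : Ahat0 := Pi.single i 1

/-! On a basis, `v0` commutes with the differentials by direct inspection. A cycle `c` of `Ahat0`
has zero coefficients at `a 0, a 7, a 9, a 12`, since `d0` sends these to the basis vectors
`a 1, a 8, a 10, a 11`, which no other basis vector hits. Every remaining basis vector goes under
`v0` to `0` or to one of the boundaries `b 6 = d (b 5)`, `b 8 = d (b 7)`, `b 10 = d (b 9)`,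
`b 11 = d (b 12)`, so `v0 c` is a boundary. -/

namespace LinearMap

variable {ι R M : Type*} [Fintype ι] [DecidableEq ι] [CommSemiring R] [AddCommMonoid M]
  [Module R M]

theorem apply_eq_sum_smul_apply_single (f : (ι → R) →ₗ[R] M) (c : ι → R) :
    f c = ∑ i, c i • f (Pi.single i 1) := by
  conv_lhs => rw [← (Pi.basisFun R ι).sum_repr c]
  simp only [map_sum, map_smul, Pi.basisFun_repr, Pi.basisFun_apply]

theorem apply_mem_of_forall_eq_zero_or_apply_single_mem (f : (ι → R) →ₗ[R] M)
    {p : Submodule R M} {c : ι → R} (h : ∀ i, c i = 0 ∨ f (Pi.single i 1) ∈ p) :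
    f c ∈ p := by
  rw [f.apply_eq_sum_smul_apply_single c]
  refine p.sum_mem fun i _ => ?_
  rcases h i with hci | hmem
  · simp [hci]
  · exact p.smul_mem _ hmem

end LinearMap

theorem single_one_eq_a (i : Fin 13) : (Pi.single i 1 : Ahat0) = a i := rfl

theorem v0_chain_map_trivial_on_homology_general
    (d : Bhat →ₗ[F] Bhat)
    (hb0 : d (b 0) = 0)
    (hb5 : d (b 5) = b 6)
    (hb6 : d (b 6) = 0) (hb7 : d (b 7) = b 8)
    (hb8 : d (b 8) = 0) (hb9 : d (b 9) = b 10)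
    (hb10 : d (b 10) = 0) (hb11 : d (b 11) = 0)
    (hb12 : d (b 12) = b 11)
    (d0 : Ahat0 →ₗ[F] Ahat0)
    (ha0 : d0 (a 0) = a 1) (ha1 : d0 (a 1) = 0)
    (ha2 : d0 (a 2) = 0) (ha3 : d0 (a 3) = a 2)
    (ha4 : d0 (a 4) = 0) (ha5 : d0 (a 5) = a 4)
    (ha6 : d0 (a 6) = 0) (ha7 : d0 (a 7) = a 8)
    (ha8 : d0 (a 8) = 0) (ha9 : d0 (a 9) = a 10)
    (ha10 : d0 (a 10) = 0) (ha11 : d0 (a 11) = 0)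
    (ha12 : d0 (a 12) = a 11)
    (v0 : Ahat0 →ₗ[F] Bhat)
    (hv0 : v0 (a 0) = b 0) (hv1 : v0 (a 1) = 0)
    (hv2 : v0 (a 2) = 0) (hv3 : v0 (a 3) = 0)
    (hv4 : v0 (a 4) = 0) (hv5 : v0 (a 5) = 0)
    (hv6 : v0 (a 6) = b 6) (hv7 : v0 (a 7) = b 7)
    (hv8 : v0 (a 8) = b 8) (hv9 : v0 (a 9) = b 9)
    (hv10 : v0 (a 10) = b 10) (hv11 : v0 (a 11) = b 11)
    (hv12 : v0 (a 12) = b 12) :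
    d.comp v0 = v0.comp d0 ∧
    (∀ c : Ahat0, d0 c = 0 → ∃ e : Bhat, v0 c = d e) := by
  constructor
  · refine (Pi.basisFun F (Fin 13)).ext fun i => ?_
    rw [Pi.basisFun_apply, single_one_eq_a]
    fin_cases i <;> simp [hv0, hv1, hv2, hv3, hv4, hv5, hv6, hv7, hv8, hv9, hv10, hv11, hv12,
      ha0, ha1, ha2, ha3, ha4, ha5, ha6, ha7, ha8, ha9, ha10, ha11, ha12,
      hb0, hb6, hb7, hb8, hb9, hb10, hb11, hb12]
  · intro c hc
    have hd0c : d0 c =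
        c 0 • a 1 + c 3 • a 2 + c 5 • a 4 + c 7 • a 8 + c 9 • a 10 + c 12 • a 11 := by
      rw [d0.apply_eq_sum_smul_apply_single c]
      simp [Fin.sum_univ_succ, single_one_eq_a, ha0, ha1, ha2, ha3, ha4, ha5, ha6, ha7, ha8, ha9,
        ha10, ha11, ha12, add_assoc]
    have hc0 : c 0 = 0 := by simpa [hd0c, a] using congrFun hc 1
    have hc7 : c 7 = 0 := by simpa [hd0c, a] using congrFun hc 8
    have hc9 : c 9 = 0 := by simpa [hd0c, a] using congrFun hc 10
    have hc12 : c 12 = 0 := by simpa [hd0c, a] using congrFun hc 11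
    suffices v0 c ∈ LinearMap.range d from (LinearMap.mem_range.mp this).imp fun _ => Eq.symm
    refine v0.apply_mem_of_forall_eq_zero_or_apply_single_mem fun i => ?_
    rw [single_one_eq_a]
    fin_cases i <;> simp [hc0, hc7, hc9, hc12, hv1, hv2, hv3, hv4, hv5, hv6, hv8, hv10, hv11,
      ← hb5, ← hb7, ← hb9, ← hb12]

theorem v0_chain_map_trivial_on_homology
    (d : Bhat →ₗ[F] Bhat)
    (hb0 : d (b 0) = 0) (hb1 : d (b 1) = 0)
    (hb2 : d (b 2) = b 1) (hb3 : d (b 3) = b 4)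
    (hb4 : d (b 4) = 0) (hb5 : d (b 5) = b 6)
    (hb6 : d (b 6) = 0) (hb7 : d (b 7) = b 8)
    (hb8 : d (b 8) = 0) (hb9 : d (b 9) = b 10)
    (hb10 : d (b 10) = 0) (hb11 : d (b 11) = 0)
    (hb12 : d (b 12) = b 11)
    (d0 : Ahat0 →ₗ[F] Ahat0)
    (ha0 : d0 (a 0) = a 1) (ha1 : d0 (a 1) = 0)
    (ha2 : d0 (a 2) = 0) (ha3 : d0 (a 3) = a 2)
    (ha4 : d0 (a 4) = 0) (ha5 : d0 (a 5) = a 4)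
    (ha6 : d0 (a 6) = 0) (ha7 : d0 (a 7) = a 8)
    (ha8 : d0 (a 8) = 0) (ha9 : d0 (a 9) = a 10)
    (ha10 : d0 (a 10) = 0) (ha11 : d0 (a 11) = 0)
    (ha12 : d0 (a 12) = a 11)
    (v0 : Ahat0 →ₗ[F] Bhat)
    (hv0 : v0 (a 0) = b 0) (hv1 : v0 (a 1) = 0)
    (hv2 : v0 (a 2) = 0) (hv3 : v0 (a 3) = 0)
    (hv4 : v0 (a 4) = 0) (hv5 : v0 (a 5) = 0)
    (hv6 : v0 (a 6) = b 6) (hv7 : v0 (a 7) = b 7)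
    (hv8 : v0 (a 8) = b 8) (hv9 : v0 (a 9) = b 9)
    (hv10 : v0 (a 10) = b 10) (hv11 : v0 (a 11) = b 11)
    (hv12 : v0 (a 12) = b 12) :
    d.comp v0 = v0.comp d0 ∧
    (∀ c : Ahat0, d0 c = 0 → ∃ e : Bhat, v0 c = d e) :=
  v0_chain_map_trivial_on_homology_general d hb0 hb5 hb6 hb7 hb8 hb9 hb10 hb11 hb12 d0 ha0 ha1 ha2
    ha3 ha4 ha5 ha6 ha7 ha8 ha9 ha10 ha11 ha12 v0 hv0 hv1 hv2 hv3 hv4 hv5 hv6 hv7 hv8 hv9 hv10 hv11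
    hv12

end
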